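/- arXiv:0906.0539 — 3 statements merged into one kernel-verified Lean document; each statement's English description precedes it below -/
import Mathlib

section
/- Let F : ℂ₊ → ℂ be smooth and define G(z) = (Im z)² · ∂[w ↦ F(w)/Im w](z) for z ∈ ℂ₊. Then ∂̄G(z) = (Im z)·ΔF(z) + (i/2)(∂F(z) + ∂̄F(z)) for all z ∈ ℂ₊, where ΔF = ∂(∂̄F). -/
open MeasureTheory Complex

/-- The upper half-plane as a subset of `ℂ`. -/
def UHP : Set ℂ := {z : ℂ | 0 < z.im}

/-- The Wirtinger derivative `∂ = (1/2)(∂/∂x - i ∂/∂y)`. -/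
noncomputable def wd (f : ℂ → ℂ) (z : ℂ) : ℂ :=
  (fderiv ℝ f z 1 - Complex.I * fderiv ℝ f z Complex.I) / 2

/-- The Wirtinger derivative `∂̄ = (1/2)(∂/∂x + i ∂/∂y)`. -/
noncomputable def wdb (f : ℂ → ℂ) (z : ℂ) : ℂ :=
  (fderiv ℝ f z 1 + Complex.I * fderiv ℝ f z Complex.I) / 2

/-- for `F` smooth on the upper half-plane and
`G(z) = (Im z)² ∂[w ↦ F(w)/Im w](z)`, one has
`∂̄G(z) = (Im z) ΔF(z) + (i/2)(∂F(z) + ∂̄F(z))` on `ℂ₊`, where `ΔF = ∂(∂̄F)`. -/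
theorem wdb_of_G (F : ℂ → ℂ) (hF : ContDiffOn ℝ (⊤ : ℕ∞) F UHP) (z : ℂ) (hz : z ∈ UHP) :
    wdb (fun ζ : ℂ => ((ζ.im : ℂ)) ^ 2 * wd (fun w : ℂ => F w / (w.im : ℂ)) ζ) z =
      (z.im : ℂ) * wd (wdb F) z + (Complex.I / 2) * (wd F z + wdb F z) := by
  have hUo : IsOpen UHP := isOpen_lt continuous_const Complex.continuous_im
  set L : ℂ →L[ℝ] ℂ := Complex.ofRealCLM.comp Complex.imCLM with hLdef
  have hLapp : ∀ v : ℂ, L v = (v.im : ℂ) := fun v => rfl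
  have key : ∀ ζ ∈ UHP, ((ζ.im:ℂ))^2 * wd (fun w : ℂ => F w / (w.im:ℂ)) ζ
      = (ζ.im:ℂ) * wd F ζ + (Complex.I/2) * F ζ := by
    intro ζ hζ
    have hy : (ζ.im:ℂ) ≠ 0 := by
      simp only [ne_eq, Complex.ofReal_eq_zero]
      exact ne_of_gt hζ
    have hFd : DifferentiableAt ℝ F ζ :=
      (hF.contDiffAt (hUo.mem_nhds hζ)).differentiableAt (by simp)
    have hIm : HasFDerivAt (fun w : ℂ => ((w.im:ℂ))) L ζ := L.hasFDerivAt
    have hinv : HasFDerivAt (fun w : ℂ => ((w.im:ℂ))⁻¹) _ ζ :=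
      ((hasFDerivAt_inv hy).restrictScalars ℝ).comp ζ hIm
    have hq : HasFDerivAt (fun w : ℂ => F w * ((w.im:ℂ))⁻¹) _ ζ :=
      hFd.hasFDerivAt.mul hinv
    have hfun : (fun w : ℂ => F w / (w.im:ℂ)) = fun w : ℂ => F w * ((w.im:ℂ))⁻¹ := by
      funext w; rw [div_eq_mul_inv]
    rw [wd, hfun, hq.fderiv]
    simp only [ContinuousLinearMap.add_apply, ContinuousLinearMap.coe_smul',
      Pi.smul_apply, ContinuousLinearMap.coe_comp', Function.comp_apply,
      ContinuousLinearMap.coe_restrictScalars', ContinuousLinearMap.smulRight_apply,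
      ContinuousLinearMap.one_apply, hLapp, Complex.one_im, Complex.I_im,
      Complex.ofReal_zero, Complex.ofReal_one, smul_eq_mul, wd, ContinuousLinearMap.toSpanSingleton_apply]
    have ht : (ζ.im:ℂ) * ((ζ.im:ℂ))⁻¹ = 1 := mul_inv_cancel₀ hy
    have ht2 : ((ζ.im:ℂ)^2) * (((ζ.im:ℂ))^2)⁻¹ = 1 := mul_inv_cancel₀ (pow_ne_zero 2 hy)
    linear_combination (((fderiv ℝ F ζ) 1 - Complex.I * (fderiv ℝ F ζ) Complex.I) * (ζ.im:ℂ) / 2) * ht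
      + (Complex.I * F ζ / 2) * ht2
  have hmem : UHP ∈ nhds z := hUo.mem_nhds hz
  have heq : (fun ζ : ℂ => ((ζ.im:ℂ))^2 * wd (fun w : ℂ => F w / (w.im:ℂ)) ζ)
      =ᶠ[nhds z] (fun ζ : ℂ => (ζ.im:ℂ) * wd F ζ + (Complex.I/2) * F ζ) :=
    Filter.eventuallyEq_of_mem hmem key
  have hFz : ContDiffAt ℝ (⊤ : ℕ∞) F z := hF.contDiffAt hmem
  have hDd : DifferentiableAt ℝ (fderiv ℝ F) z :=
    (hFz.fderiv_right (m := 1) (by exact WithTop.coe_le_coe.mpr le_top)).differentiableAt one_ne_zero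
  have h1 : HasFDerivAt (fun ζ : ℂ => fderiv ℝ F ζ (1:ℂ))
      ((fderiv ℝ (fderiv ℝ F) z).flip 1) z := by
    simpa using hDd.hasFDerivAt.clm_apply (hasFDerivAt_const (1:ℂ) z)
  have h2 : HasFDerivAt (fun ζ : ℂ => fderiv ℝ F ζ Complex.I)
      ((fderiv ℝ (fderiv ℝ F) z).flip Complex.I) z := by
    simpa using hDd.hasFDerivAt.clm_apply (hasFDerivAt_const (Complex.I) z)
  have hwdeq : (wd F) = fun ζ => (fderiv ℝ F ζ 1 - Complex.I * fderiv ℝ F ζ Complex.I) * (2:ℂ)⁻¹ := by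
    funext ζ; rw [wd, div_eq_mul_inv]
  have hwdbeq : (wdb F) = fun ζ => (fderiv ℝ F ζ 1 + Complex.I * fderiv ℝ F ζ Complex.I) * (2:ℂ)⁻¹ := by
    funext ζ; rw [wdb, div_eq_mul_inv]
  have hwdF : HasFDerivAt (wd F) ((2:ℂ)⁻¹ • ((fderiv ℝ (fderiv ℝ F) z).flip 1
      - Complex.I • (fderiv ℝ (fderiv ℝ F) z).flip Complex.I)) z := by
    rw [hwdeq]; exact (h1.sub (h2.const_mul Complex.I)).mul_const ((2:ℂ)⁻¹)
  have hwdbF : HasFDerivAt (wdb F) ((2:ℂ)⁻¹ • ((fderiv ℝ (fderiv ℝ F) z).flip 1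
      + Complex.I • (fderiv ℝ (fderiv ℝ F) z).flip Complex.I)) z := by
    rw [hwdbeq]; exact (h1.add (h2.const_mul Complex.I)).mul_const ((2:ℂ)⁻¹)
  have hImz : HasFDerivAt (fun ζ : ℂ => ((ζ.im:ℂ))) L z := L.hasFDerivAt
  have hH : HasFDerivAt (fun ζ : ℂ => (ζ.im:ℂ) * wd F ζ + (Complex.I/2) * F ζ) _ z :=
    (hImz.mul hwdF).add (((hFz.differentiableAt (by simp)).hasFDerivAt).const_mul (Complex.I/2))
  have hsymm : fderiv ℝ (fderiv ℝ F) z 1 Complex.I = fderiv ℝ (fderiv ℝ F) z Complex.I 1 :=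
    (hFz.isSymmSndFDerivAt (by rw [minSmoothness_of_isRCLikeNormedField]; exact WithTop.coe_le_coe.mpr le_top)) 1 Complex.I
  rw [show wdb (fun ζ : ℂ => ((ζ.im : ℂ)) ^ 2 * wd (fun w : ℂ => F w / (w.im : ℂ)) ζ) z = (fderiv ℝ (fun ζ : ℂ => ((ζ.im : ℂ)) ^ 2 * wd (fun w : ℂ => F w / (w.im : ℂ)) ζ) z 1 + Complex.I * fderiv ℝ (fun ζ : ℂ => ((ζ.im : ℂ)) ^ 2 * wd (fun w : ℂ => F w / (w.im : ℂ)) ζ) z Complex.I) / 2 from rfl, heq.fderiv_eq, hH.fderiv,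
    show wd (wdb F) z = (fderiv ℝ (wdb F) z 1 - Complex.I * fderiv ℝ (wdb F) z Complex.I)/2 from rfl,
    hwdbF.fderiv]
  simp only [ContinuousLinearMap.add_apply, ContinuousLinearMap.coe_smul',
    Pi.smul_apply, ContinuousLinearMap.coe_sub', Pi.sub_apply,
    ContinuousLinearMap.coe_comp', Function.comp_apply, ContinuousLinearMap.flip_apply,
    ContinuousLinearMap.smul_apply, hLapp, Complex.one_im, Complex.I_im,
    Complex.ofReal_zero, Complex.ofReal_one, smul_eq_mul, wd, wdb]
  rw [hsymm]
  ring
end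

section
/- For every smooth compactly supported f : ℂ₊ → ℂ one has ∫_{ℂ₊} |f(z)|² / (Im z)² dA(z) ≤ 16 ∫_{ℂ₊} |∂̄f(z)|² dA(z). -/
open MeasureTheory Complex
open Set

namespace HardyAux

variable {E : Type*} [NormedAddCommGroup E] [NormedSpace ℝ E] [CompleteSpace E]


lemma slice_x (g : ℂ → E) (hg : ContDiff ℝ 1 g) (hc : HasCompactSupport g) (y : ℝ) :
    ∫ x : ℝ, fderiv ℝ g (⟨x, y⟩ : ℂ) 1 = 0 := by
  obtain ⟨R, hR⟩ : ∃ R, tsupport g ⊆ Metric.closedBall 0 R := (hc.isCompact.isBounded).subset_closedBall 0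
  set ℓ : ℝ → ℂ := fun x => ⟨x, y⟩ with hℓ
  have hℓ' : ∀ x, HasDerivAt ℓ 1 x := by
    intro x
    have : ℓ = fun x : ℝ => (x : ℂ) + (⟨0, y⟩ : ℂ) := by
      funext x; apply Complex.ext <;> simp [hℓ]
    rw [this]
    simpa using (Complex.ofRealCLM.hasDerivAt (x := x)).add_const (⟨0, y⟩ : ℂ)
  have hgy : ContDiff ℝ 1 (g ∘ ℓ) := by
    apply hg.comp
    have : ℓ = fun x : ℝ => (x : ℂ) + (⟨0, y⟩ : ℂ) := by
      funext x; apply Complex.ext <;> simp [hℓ]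
    rw [this]; exact Complex.ofRealCLM.contDiff.add contDiff_const
  have hder : ∀ x, deriv (g ∘ ℓ) x = fderiv ℝ g (⟨x, y⟩ : ℂ) 1 := by
    intro x
    have h1 : HasDerivAt (g ∘ ℓ) (fderiv ℝ g (ℓ x) 1) x := by
      have := ((hg.differentiable one_ne_zero (ℓ x)).hasFDerivAt).comp_hasDerivAt x (hℓ' x)
      simpa using this
    exact h1.deriv
  have hcs : HasCompactSupport (g ∘ ℓ) := by
    apply HasCompactSupport.intro (isCompact_Icc (a := -R) (b := R))
    intro x hx
    simp only [Function.comp]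
    by_contra h
    have hmem : ℓ x ∈ tsupport g := subset_tsupport g h
    have := hR hmem
    simp only [Metric.mem_closedBall, Complex.dist_eq] at this
    have habs : |x| ≤ R := by
      calc |x| = |(ℓ x).re| := by simp [hℓ]
        _ ≤ ‖ℓ x‖ := Complex.abs_re_le_norm _
        _ ≤ R := by simpa using this
    exact hx (abs_le.mp habs)
  have hint : Integrable (deriv (g ∘ ℓ)) :=
    (hgy.continuous_deriv le_rfl).integrable_of_hasCompactSupport hcs.deriv
  calc ∫ x : ℝ, fderiv ℝ g (⟨x, y⟩ : ℂ) 1 = ∫ x : ℝ, deriv (g ∘ ℓ) x := by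
        congr 1; funext x; rw [hder]
    _ = (∫ x in Iic 0, deriv (g ∘ ℓ) x) + ∫ x in Ioi 0, deriv (g ∘ ℓ) x := by
        rw [intervalIntegral.integral_Iic_add_Ioi hint.integrableOn hint.integrableOn]
    _ = 0 := by
        rw [hcs.integral_Iic_deriv_eq hgy (0:ℝ), hcs.integral_Ioi_deriv_eq hgy (0:ℝ)]; abel

open MeasureTheory Complex
open Set

lemma slice_y (g : ℂ → E) (hg : ContDiff ℝ 1 g) (hc : HasCompactSupport g) (x : ℝ) :
    ∫ y : ℝ, fderiv ℝ g (⟨x, y⟩ : ℂ) Complex.I = 0 := by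
  obtain ⟨R, hR⟩ : ∃ R, tsupport g ⊆ Metric.closedBall 0 R := (hc.isCompact.isBounded).subset_closedBall 0
  set ℓ : ℝ → ℂ := fun y => ⟨x, y⟩ with hℓ
  have hℓeq : ℓ = fun y : ℝ => (y : ℂ) * Complex.I + (⟨x, 0⟩ : ℂ) := by
    funext y; apply Complex.ext <;> simp [hℓ]
  have hℓ' : ∀ y, HasDerivAt ℓ Complex.I y := by
    intro y
    rw [hℓeq]
    simpa using ((Complex.ofRealCLM.hasDerivAt (x := y)).mul_const Complex.I).add_const (⟨x, 0⟩ : ℂ)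
  have hgy : ContDiff ℝ 1 (g ∘ ℓ) := by
    apply hg.comp
    rw [hℓeq]; exact (Complex.ofRealCLM.contDiff.mul contDiff_const).add contDiff_const
  have hder : ∀ y, deriv (g ∘ ℓ) y = fderiv ℝ g (⟨x, y⟩ : ℂ) Complex.I := by
    intro y
    have h1 : HasDerivAt (g ∘ ℓ) (fderiv ℝ g (ℓ y) Complex.I) y := by
      simpa using ((hg.differentiable one_ne_zero (ℓ y)).hasFDerivAt).comp_hasDerivAt y (hℓ' y)
    exact h1.deriv
  have hcs : HasCompactSupport (g ∘ ℓ) := by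
    apply HasCompactSupport.intro (isCompact_Icc (a := -R) (b := R))
    intro y hy
    simp only [Function.comp]
    by_contra h
    have hmem : ℓ y ∈ tsupport g := subset_tsupport g h
    have := hR hmem
    simp only [Metric.mem_closedBall, Complex.dist_eq] at this
    have habs : |y| ≤ R := by
      calc |y| = |(ℓ y).im| := by simp [hℓ]
        _ ≤ ‖ℓ y‖ := Complex.abs_im_le_norm _
        _ ≤ R := by simpa using this
    exact hy (abs_le.mp habs)
  have hint : Integrable (deriv (g ∘ ℓ)) :=
    (hgy.continuous_deriv le_rfl).integrable_of_hasCompactSupport hcs.deriv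
  calc ∫ y : ℝ, fderiv ℝ g (⟨x, y⟩ : ℂ) Complex.I = ∫ y : ℝ, deriv (g ∘ ℓ) y := by
        congr 1; funext y; rw [hder]
    _ = (∫ y in Iic 0, deriv (g ∘ ℓ) y) + ∫ y in Ioi 0, deriv (g ∘ ℓ) y := by
        rw [intervalIntegral.integral_Iic_add_Ioi hint.integrableOn hint.integrableOn]
    _ = 0 := by
        rw [hcs.integral_Iic_deriv_eq hgy (0:ℝ), hcs.integral_Ioi_deriv_eq hgy (0:ℝ)]; abel

-- full 2D vanishing

lemma int_fderiv_x (g : ℂ → E) (hg : ContDiff ℝ 1 g) (hc : HasCompactSupport g) :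
    ∫ z : ℂ, fderiv ℝ g z 1 = 0 := by
  have hcont : Continuous fun z => fderiv ℝ g z (1:ℂ) :=
    (hg.continuous_fderiv one_ne_zero).clm_apply continuous_const
  have hsupp : HasCompactSupport fun z => fderiv ℝ g z (1:ℂ) :=
    (hc.fderiv (𝕜 := ℝ)).comp_left (g := fun L : ℂ →L[ℝ] E => L 1) (by simp)
  have hint : Integrable fun z => fderiv ℝ g z (1:ℂ) := hcont.integrable_of_hasCompactSupport hsupp
  have hcomp : ∫ p : ℝ × ℝ, fderiv ℝ g (measurableEquivRealProd.symm p) (1:ℂ) = ∫ z : ℂ, fderiv ℝ g z (1:ℂ) :=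
    (Complex.volume_preserving_equiv_real_prod.symm).integral_comp
      measurableEquivRealProd.symm.measurableEmbedding (fun z => fderiv ℝ g z (1:ℂ))
  rw [← hcomp]
  have hintp : Integrable (fun p : ℝ × ℝ => fderiv ℝ g (measurableEquivRealProd.symm p) (1:ℂ)) := by
    exact (Complex.volume_preserving_equiv_real_prod.symm).integrable_comp_emb
      measurableEquivRealProd.symm.measurableEmbedding |>.mpr hint
  rw [MeasureTheory.Measure.volume_eq_prod] at hintp ⊢
  rw [integral_prod_symm _ hintp]
  simp only [Complex.measurableEquivRealProd_symm_apply]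
  simp only [slice_x g hg hc, integral_zero]

lemma int_fderiv_y (g : ℂ → E) (hg : ContDiff ℝ 1 g) (hc : HasCompactSupport g) :
    ∫ z : ℂ, fderiv ℝ g z Complex.I = 0 := by
  have hcont : Continuous fun z => fderiv ℝ g z Complex.I :=
    (hg.continuous_fderiv one_ne_zero).clm_apply continuous_const
  have hsupp : HasCompactSupport fun z => fderiv ℝ g z Complex.I :=
    (hc.fderiv (𝕜 := ℝ)).comp_left (g := fun L : ℂ →L[ℝ] E => L Complex.I) (by simp)
  have hint : Integrable fun z => fderiv ℝ g z Complex.I := hcont.integrable_of_hasCompactSupport hsupp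
  have hcomp : ∫ p : ℝ × ℝ, fderiv ℝ g (measurableEquivRealProd.symm p) Complex.I = ∫ z : ℂ, fderiv ℝ g z Complex.I :=
    (Complex.volume_preserving_equiv_real_prod.symm).integral_comp
      measurableEquivRealProd.symm.measurableEmbedding (fun z => fderiv ℝ g z Complex.I)
  rw [← hcomp]
  have hintp : Integrable (fun p : ℝ × ℝ => fderiv ℝ g (measurableEquivRealProd.symm p) Complex.I) := by
    exact (Complex.volume_preserving_equiv_real_prod.symm).integrable_comp_emb
      measurableEquivRealProd.symm.measurableEmbedding |>.mpr hint
  rw [MeasureTheory.Measure.volume_eq_prod] at hintp ⊢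
  rw [integral_prod _ hintp]
  simp only [Complex.measurableEquivRealProd_symm_apply]
  simp only [slice_y g hg hc, integral_zero]

lemma wd_eq_wdb (f : ℂ → ℂ) (hf : ContDiff ℝ (⊤ : ℕ∞) f) (hsupp : HasCompactSupport f) :
    ∫ z : ℂ, ‖wd f z‖^2 = ∫ z : ℂ, ‖wdb f z‖^2 := by
  set fx : ℂ → ℂ := fun z => fderiv ℝ f z 1 with hfxdef
  set fy : ℂ → ℂ := fun z => fderiv ℝ f z Complex.I with hfydef
  have hf' : ContDiff ℝ (⊤ : ℕ∞) (fderiv ℝ f) := hf.fderiv_right (by simp)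
  have hfx : ContDiff ℝ (⊤ : ℕ∞) fx := hf'.clm_apply contDiff_const
  have hfy : ContDiff ℝ (⊤ : ℕ∞) fy := hf'.clm_apply contDiff_const
  have hzero : ∀ z ∉ tsupport f, f z = 0 ∧ fx z = 0 ∧ fy z = 0 := by
    intro z hz
    have h0 : f z = 0 := image_eq_zero_of_notMem_tsupport hz
    have h1 : fderiv ℝ f z = 0 := by
      by_contra h
      exact hz (support_fderiv_subset ℝ (by simpa using h))
    refine ⟨h0, ?_, ?_⟩ <;> simp [hfxdef, hfydef, h1]
  -- derivative computations
  have hder1 : ∀ z, fderiv ℝ (fun w => f w * (starRingEnd ℂ) (fy w)) z 1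
      = fx z * (starRingEnd ℂ) (fy z)
        + f z * (starRingEnd ℂ) (fderiv ℝ (fderiv ℝ f) z 1 Complex.I) := by
    intro z
    have h1 : HasFDerivAt (fun w => (starRingEnd ℂ) (fy w))
        ((Complex.conjCLE.toContinuousLinearMap).comp
          (((ContinuousLinearMap.apply ℝ ℂ Complex.I)).comp (fderiv ℝ (fderiv ℝ f) z))) z := by
      have ha := (Complex.conjCLE.toContinuousLinearMap).hasFDerivAt (x := fderiv ℝ f z Complex.I)
      have hb := (ContinuousLinearMap.apply ℝ ℂ Complex.I).hasFDerivAt (x := fderiv ℝ f z)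
      have hc := (hf'.differentiable (by simp) z).hasFDerivAt
      exact ha.comp z (hb.comp z hc)
    have h2 := ((hf.differentiable (by simp) z).hasFDerivAt).mul h1
    rw [show (fun w => f w * (starRingEnd ℂ) (fy w)) = f * fun w => (starRingEnd ℂ) (fy w) from rfl,
      h2.fderiv]
    simp [ContinuousLinearMap.apply, hfxdef]
    ring
  have hder2 : ∀ z, fderiv ℝ (fun w => f w * (starRingEnd ℂ) (fx w)) z Complex.I
      = fy z * (starRingEnd ℂ) (fx z)
        + f z * (starRingEnd ℂ) (fderiv ℝ (fderiv ℝ f) z Complex.I 1) := by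
    intro z
    have h1 : HasFDerivAt (fun w => (starRingEnd ℂ) (fx w))
        ((Complex.conjCLE.toContinuousLinearMap).comp
          (((ContinuousLinearMap.apply ℝ ℂ 1)).comp (fderiv ℝ (fderiv ℝ f) z))) z := by
      have ha := (Complex.conjCLE.toContinuousLinearMap).hasFDerivAt (x := fderiv ℝ f z 1)
      have hb := (ContinuousLinearMap.apply ℝ ℂ 1).hasFDerivAt (x := fderiv ℝ f z)
      have hc := (hf'.differentiable (by simp) z).hasFDerivAt
      exact ha.comp z (hb.comp z hc)
    have h2 := ((hf.differentiable (by simp) z).hasFDerivAt).mul h1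
    rw [show (fun w => f w * (starRingEnd ℂ) (fx w)) = f * fun w => (starRingEnd ℂ) (fx w) from rfl,
      h2.fderiv]
    simp [ContinuousLinearMap.apply, hfydef]
    ring
  -- integrability helpers
  have mkint : ∀ (g : ℂ → ℂ), Continuous g → (∀ z ∉ tsupport f, g z = 0) → Integrable g := by
    intro g hg h
    exact hg.integrable_of_hasCompactSupport (HasCompactSupport.intro hsupp h)
  have hcont2 : Continuous (fderiv ℝ (fderiv ℝ f)) := (hf'.fderiv_right (m := 1) (WithTop.coe_le_coe.mpr le_top)).continuous
  have hintT : Integrable (fun z => fx z * (starRingEnd ℂ) (fy z)) := by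
    refine mkint _ ((hfx.continuous).mul (Complex.continuous_conj.comp hfy.continuous)) ?_
    intro z hz; rw [(hzero z hz).2.1]; simp
  have hintF1 : Integrable (fun z => f z * (starRingEnd ℂ) (fderiv ℝ (fderiv ℝ f) z 1 Complex.I)) := by
    refine mkint _ ((hf.continuous).mul (Complex.continuous_conj.comp
      (((hcont2.clm_apply continuous_const).clm_apply continuous_const)))) ?_
    intro z hz; rw [(hzero z hz).1]; simp
  have hintF2 : Integrable (fun z => f z * (starRingEnd ℂ) (fderiv ℝ (fderiv ℝ f) z Complex.I 1)) := by
    refine mkint _ ((hf.continuous).mul (Complex.continuous_conj.comp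
      (((hcont2.clm_apply continuous_const).clm_apply continuous_const)))) ?_
    intro z hz; rw [(hzero z hz).1]; simp
  have hintT' : Integrable (fun z => fy z * (starRingEnd ℂ) (fx z)) := by
    refine mkint _ ((hfy.continuous).mul (Complex.continuous_conj.comp hfx.continuous)) ?_
    intro z hz; rw [(hzero z hz).2.2]; simp
  -- the two integration by parts identities
  have hQ1 : ContDiff ℝ 1 (fun w => f w * (starRingEnd ℂ) (fy w)) :=
    (hf.of_le (by simp)).mul (Complex.conjCLE.contDiff.comp (hfy.of_le (by simp)))
  have hQ2 : ContDiff ℝ 1 (fun w => f w * (starRingEnd ℂ) (fx w)) :=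
    (hf.of_le (by simp)).mul (Complex.conjCLE.contDiff.comp (hfx.of_le (by simp)))
  have hQ1s : HasCompactSupport (fun w => f w * (starRingEnd ℂ) (fy w)) :=
    HasCompactSupport.intro hsupp (fun z hz => by rw [(hzero z hz).1]; simp)
  have hQ2s : HasCompactSupport (fun w => f w * (starRingEnd ℂ) (fx w)) :=
    HasCompactSupport.intro hsupp (fun z hz => by rw [(hzero z hz).1]; simp)
  have S1 : (∫ z : ℂ, fx z * (starRingEnd ℂ) (fy z))
      + (∫ z : ℂ, f z * (starRingEnd ℂ) (fderiv ℝ (fderiv ℝ f) z 1 Complex.I)) = 0 := by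
    rw [← integral_add hintT hintF1]
    rw [← int_fderiv_x _ hQ1 hQ1s]
    exact integral_congr_ae (Filter.Eventually.of_forall (fun z => (hder1 z).symm))
  have S2 : (∫ z : ℂ, fy z * (starRingEnd ℂ) (fx z))
      + (∫ z : ℂ, f z * (starRingEnd ℂ) (fderiv ℝ (fderiv ℝ f) z Complex.I 1)) = 0 := by
    rw [← integral_add hintT' hintF2]
    rw [← int_fderiv_y _ hQ2 hQ2s]
    exact integral_congr_ae (Filter.Eventually.of_forall (fun z => (hder2 z).symm))
  -- Clairaut
  have hsym : (fun z => f z * (starRingEnd ℂ) (fderiv ℝ (fderiv ℝ f) z 1 Complex.I))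
      = (fun z => f z * (starRingEnd ℂ) (fderiv ℝ (fderiv ℝ f) z Complex.I 1)) := by
    funext z
    rw [(hf.contDiffAt.isSymmSndFDerivAt (by simp [minSmoothness_of_isRCLikeNormedField]; exact WithTop.coe_le_coe.mpr (le_top : (2:ℕ∞) ≤ ⊤))) 1 Complex.I]
  rw [hsym] at S1
  have hT : (∫ z : ℂ, fx z * (starRingEnd ℂ) (fy z)) = ∫ z : ℂ, fy z * (starRingEnd ℂ) (fx z) := by
    linear_combination S1 - S2
  have hTconj : (∫ z : ℂ, fy z * (starRingEnd ℂ) (fx z))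
      = (starRingEnd ℂ) (∫ z : ℂ, fx z * (starRingEnd ℂ) (fy z)) := by
    rw [← integral_conj]
    congr 1; funext z; simp [mul_comm]
  have hTreal : (∫ z : ℂ, fx z * (starRingEnd ℂ) (fy z)).im = 0 := by
    have := hT.trans hTconj
    have him := congrArg Complex.im this
    simp at him
    linarith
  -- pointwise identity
  have hpt : ∀ z, ‖wd f z‖^2 - ‖wdb f z‖^2 = -(fx z * (starRingEnd ℂ) (fy z)).im := by
    intro z
    show ‖(fx z - Complex.I * fy z)/2‖^2 - ‖(fx z + Complex.I * fy z)/2‖^2 = _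
    rw [Complex.sq_norm, Complex.sq_norm]
    simp [Complex.normSq_apply, Complex.mul_im, Complex.mul_re, Complex.div_re, Complex.div_im]
    ring
  -- conclude
  have mkintR : ∀ (g : ℂ → ℝ), Continuous g → (∀ z ∉ tsupport f, g z = 0) → Integrable g := by
    intro g hg h
    exact hg.integrable_of_hasCompactSupport (HasCompactSupport.intro hsupp h)
  have hcwd : Continuous (fun z => wd f z) := by
    show Continuous (fun z => (fx z - Complex.I * fy z)/2)
    exact (hfx.continuous.sub (continuous_const.mul hfy.continuous)).div_const 2
  have hcwdb : Continuous (fun z => wdb f z) := by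
    show Continuous (fun z => (fx z + Complex.I * fy z)/2)
    exact (hfx.continuous.add (continuous_const.mul hfy.continuous)).div_const 2
  have hwd0 : ∀ z ∉ tsupport f, wd f z = 0 := by
    intro z hz
    show (fx z - Complex.I * fy z)/2 = 0
    rw [(hzero z hz).2.1, (hzero z hz).2.2]; simp
  have hwdb0 : ∀ z ∉ tsupport f, wdb f z = 0 := by
    intro z hz
    show (fx z + Complex.I * fy z)/2 = 0
    rw [(hzero z hz).2.1, (hzero z hz).2.2]; simp
  have hintwd : Integrable (fun z => ‖wd f z‖^2) :=
    mkintR _ (hcwd.norm.pow 2) (fun z hz => by rw [hwd0 z hz]; simp)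
  have hintwdb : Integrable (fun z => ‖wdb f z‖^2) :=
    mkintR _ (hcwdb.norm.pow 2) (fun z hz => by rw [hwdb0 z hz]; simp)
  have hsub : (∫ z : ℂ, ‖wd f z‖^2) - (∫ z : ℂ, ‖wdb f z‖^2) = 0 := by
    rw [← integral_sub hintwd hintwdb]
    have : (∫ z : ℂ, ‖wd f z‖^2 - ‖wdb f z‖^2) = ∫ z : ℂ, -(fx z * (starRingEnd ℂ) (fy z)).im := by
      exact integral_congr_ae (Filter.Eventually.of_forall (fun z => hpt z))
    rw [this, integral_neg]
    have h2 := integral_im (𝕜 := ℂ) hintT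
    simp only [RCLike.im_to_complex] at h2
    rw [h2, hTreal, neg_zero]
  linarith

end HardyAux


/-- for every smooth `f` with compact support contained in `ℂ₊`,
`∫_{ℂ₊} |f(z)|²/(Im z)² dA(z) ≤ 16 ∫_{ℂ₊} |∂̄f(z)|² dA(z)`. -/
theorem hardy_inequality_L2 (f : ℂ → ℂ)
    (hf : ContDiff ℝ (⊤ : ℕ∞) f) (hsupp : HasCompactSupport f) (hUHP : tsupport f ⊆ UHP) :
    Real.pi⁻¹ * ∫ z in UHP, ‖f z‖ ^ 2 / z.im ^ 2 ≤
      16 * (Real.pi⁻¹ * ∫ z in UHP, ‖wdb f z‖ ^ 2) := by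
  classical
  rcases (tsupport f).eq_empty_or_nonempty with hK | hK
  · -- trivial case : f = 0
    have hf0 : f = fun _ => 0 := by
      funext z
      exact image_eq_zero_of_notMem_tsupport (by simp [hK])
    have h1 : ∀ z : ℂ, ‖f z‖ ^ 2 / z.im ^ 2 = 0 := by
      intro z; rw [hf0]; simp
    have h2 : ∀ z : ℂ, wdb f z = 0 := by
      intro z
      show (fderiv ℝ f z 1 + Complex.I * fderiv ℝ f z Complex.I) / 2 = 0
      rw [hf0, fderiv_fun_const]
      simp
    simp only [h1, h2]
    simp
  -- main case
  obtain ⟨z₀, hz₀K, hz₀min⟩ := hsupp.exists_isMinOn hK Complex.continuous_im.continuousOn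
  set δ : ℝ := z₀.im / 2 with hδdef
  have hmpos : 0 < z₀.im := hUHP hz₀K
  have hδ : 0 < δ := by positivity
  have hKδ : ∀ z ∈ tsupport f, δ < z.im := by
    intro z hz
    have h1 : z₀.im ≤ z.im := isMinOn_iff.mp hz₀min z hz
    rw [hδdef]; linarith
  -- the cutoff weight G
  set G : ℂ → ℝ := fun z => Real.smoothTransition (2*z.im/δ - 1) * (z.im)⁻¹ with hGdef
  have hGsm : ContDiff ℝ 1 G := by
    rw [contDiff_iff_contDiffAt]
    intro z
    rcases lt_or_ge 0 z.im with hz | hz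
    · apply ContDiffAt.mul
      · have hlin : ContDiff ℝ 1 (fun w : ℂ => 2*w.im/δ - 1) :=
          ((contDiff_const.mul Complex.imCLM.contDiff).div_const δ).sub contDiff_const
        exact (Real.smoothTransition.contDiff.contDiffAt).comp z hlin.contDiffAt
      · exact (contDiffAt_inv ℝ (ne_of_gt hz)).comp z Complex.imCLM.contDiff.contDiffAt
    · have hev : G =ᶠ[nhds z] (fun _ => 0) := by
        have hopen : IsOpen {w : ℂ | w.im < δ/2} := isOpen_lt Complex.continuous_im continuous_const
        have hmem : z ∈ {w : ℂ | w.im < δ/2} := by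
          simp only [mem_setOf_eq]; linarith
        filter_upwards [hopen.mem_nhds hmem] with w hw
        rw [hGdef]; simp only
        rw [Real.smoothTransition.zero_of_nonpos, zero_mul]
        have h2 : 2*w.im/δ ≤ 1 := by
          rw [div_le_one hδ]
          have hw' : w.im < δ/2 := hw
          linarith
        linarith
      exact contDiffAt_const.congr_of_eventuallyEq hev
  have hGeq : ∀ z : ℂ, δ < z.im → G z = (z.im)⁻¹ := by
    intro z hz
    rw [hGdef]; simp only
    rw [Real.smoothTransition.one_of_one_le, one_mul]
    have h2 : (2:ℝ) ≤ 2*z.im/δ := by rw [le_div_iff₀ hδ]; linarith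
    linarith
  -- notation for derivatives
  set fx : ℂ → ℂ := fun z => fderiv ℝ f z 1 with hfxdef
  set fy : ℂ → ℂ := fun z => fderiv ℝ f z Complex.I with hfydef
  have hf' : ContDiff ℝ (⊤ : ℕ∞) (fderiv ℝ f) := hf.fderiv_right (by simp)
  have hfx : ContDiff ℝ (⊤ : ℕ∞) fx := hf'.clm_apply contDiff_const
  have hfy : ContDiff ℝ (⊤ : ℕ∞) fy := hf'.clm_apply contDiff_const
  have hzero : ∀ z ∉ tsupport f, f z = 0 ∧ fx z = 0 ∧ fy z = 0 := by
    intro z hz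
    have h0 : f z = 0 := image_eq_zero_of_notMem_tsupport hz
    have h1 : fderiv ℝ f z = 0 := by
      by_contra h
      exact hz (support_fderiv_subset ℝ (by simpa using h))
    refine ⟨h0, ?_, ?_⟩ <;> simp [hfxdef, hfydef, h1]
  -- integration by parts for the weight
  set P : ℂ → ℝ := fun w => ‖f w‖^2 * G w with hPdef
  have hnorm2 : (fun w : ℂ => ‖f w‖^2) = fun w => (f w).re^2 + (f w).im^2 := by
    funext w
    rw [Complex.sq_norm, Complex.normSq_apply]
    ring
  have hPsm : ContDiff ℝ 1 P := by
    rw [hPdef]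
    apply ContDiff.mul _ hGsm
    rw [hnorm2]
    exact ((Complex.reCLM.contDiff.comp (hf.of_le (by simp))).pow 2).add
      ((Complex.imCLM.contDiff.comp (hf.of_le (by simp))).pow 2)
  have hPsupp : HasCompactSupport P := by
    apply HasCompactSupport.intro hsupp
    intro z hz
    rw [hPdef]; simp only
    rw [(hzero z hz).1]; simp
  have hPder : ∀ z, fderiv ℝ P z Complex.I
      = 2*((starRingEnd ℂ) (f z) * fy z).re * G z - ‖f z‖^2 * (G z)^2 := by
    intro z
    by_cases hz : z ∈ tsupport f
    · have him : δ < z.im := hKδ z hz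
      -- derivative of the norm squared
      have hdfz := (hf.differentiable (by simp) z).hasFDerivAt
      have hre : HasFDerivAt (fun w => (f w).re) (Complex.reCLM.comp (fderiv ℝ f z)) z :=
        Complex.reCLM.hasFDerivAt.comp z hdfz
      have him' : HasFDerivAt (fun w => (f w).im) (Complex.imCLM.comp (fderiv ℝ f z)) z :=
        Complex.imCLM.hasFDerivAt.comp z hdfz
      have hnorm2' : (fun w : ℂ => ‖f w‖^2) = fun w => (f w).re*(f w).re + (f w).im*(f w).im := by
        funext w
        rw [Complex.sq_norm, Complex.normSq_apply]
      have hN : HasFDerivAt (fun w => ‖f w‖^2)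
          (((f z).re • (Complex.reCLM.comp (fderiv ℝ f z))
              + (f z).re • (Complex.reCLM.comp (fderiv ℝ f z)))
            + ((f z).im • (Complex.imCLM.comp (fderiv ℝ f z))
              + (f z).im • (Complex.imCLM.comp (fderiv ℝ f z)))) z := by
        rw [hnorm2']
        exact (hre.mul hre).add (him'.mul him')
      -- derivative of G
      have hGz : HasFDerivAt G ((-(z.im^2)⁻¹) • Complex.imCLM) z := by
        have hinv : HasFDerivAt (fun w : ℂ => (w.im)⁻¹) ((-(z.im^2)⁻¹) • Complex.imCLM) z := by
          have h1 : HasDerivAt (fun t : ℝ => t⁻¹) (-(z.im^2)⁻¹) z.im :=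
            hasDerivAt_inv (by linarith)
          exact h1.comp_hasFDerivAt z Complex.imCLM.hasFDerivAt
        apply hinv.congr_of_eventuallyEq
        have hopen : IsOpen {w : ℂ | δ < w.im} := isOpen_lt continuous_const Complex.continuous_im
        filter_upwards [hopen.mem_nhds him] with w hw
        exact hGeq w hw
      have hP := hN.mul hGz
      rw [show P = (fun w => ‖f w‖^2) * G from rfl, hP.fderiv]
      simp only [ContinuousLinearMap.add_apply, ContinuousLinearMap.smul_apply,
        ContinuousLinearMap.coe_comp', Function.comp_apply, Complex.reCLM_apply,
        Complex.imCLM_apply, Complex.I_im, Complex.I_re, smul_eq_mul]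
      rw [hGeq z him]
      rw [Complex.mul_re]
      simp [Complex.conj_re, Complex.conj_im, hfydef]
      ring
    · -- off the support
      have hopen : IsOpen (tsupport f)ᶜ := (isClosed_tsupport f).isOpen_compl
      have hev : P =ᶠ[nhds z] (fun _ => 0) := by
        filter_upwards [hopen.mem_nhds hz] with w hw
        rw [hPdef]; simp only
        rw [image_eq_zero_of_notMem_tsupport hw]; simp
      rw [hev.fderiv_eq]
      rw [(hzero z hz).1, (hzero z hz).2.2]
      simp
  -- integrability facts
  have mkintR : ∀ (g : ℂ → ℝ), Continuous g → (∀ z ∉ tsupport f, g z = 0) → Integrable g := by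
    intro g hg h
    exact hg.integrable_of_hasCompactSupport (HasCompactSupport.intro hsupp h)
  have hcwd : Continuous (fun z => wd f z) := by
    show Continuous (fun z => (fx z - Complex.I * fy z)/2)
    exact (hfx.continuous.sub (continuous_const.mul hfy.continuous)).div_const 2
  have hcwdb : Continuous (fun z => wdb f z) := by
    show Continuous (fun z => (fx z + Complex.I * fy z)/2)
    exact (hfx.continuous.add (continuous_const.mul hfy.continuous)).div_const 2
  have hwd0 : ∀ z ∉ tsupport f, wd f z = 0 := by
    intro z hz
    show (fx z - Complex.I * fy z)/2 = 0
    rw [(hzero z hz).2.1, (hzero z hz).2.2]; simp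
  have hwdb0 : ∀ z ∉ tsupport f, wdb f z = 0 := by
    intro z hz
    show (fx z + Complex.I * fy z)/2 = 0
    rw [(hzero z hz).2.1, (hzero z hz).2.2]; simp
  have hintwd : Integrable (fun z => ‖wd f z‖^2) :=
    mkintR _ (hcwd.norm.pow 2) (fun z hz => by rw [hwd0 z hz]; simp)
  have hintwdb : Integrable (fun z => ‖wdb f z‖^2) :=
    mkintR _ (hcwdb.norm.pow 2) (fun z hz => by rw [hwdb0 z hz]; simp)
  have hint1 : Integrable (fun z => 2*((starRingEnd ℂ) (f z) * fy z).re * G z) := by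
    refine mkintR _ ?_ ?_
    · exact ((continuous_const.mul (Complex.continuous_re.comp
        ((Complex.continuous_conj.comp hf.continuous).mul hfy.continuous))).mul hGsm.continuous)
    · intro z hz; rw [(hzero z hz).1]; simp
  have hint2 : Integrable (fun z => ‖f z‖^2 * (G z)^2) := by
    refine mkintR _ (((hf.continuous.norm.pow 2).mul (hGsm.continuous.pow 2))) ?_
    intro z hz; rw [(hzero z hz).1]; simp
  -- the integration by parts identity
  have hibp : (∫ z : ℂ, ‖f z‖^2 * (G z)^2)
      = ∫ z : ℂ, 2*((starRingEnd ℂ) (f z) * fy z).re * G z := by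
    have h0 := HardyAux.int_fderiv_y P hPsm hPsupp
    have h1 : (∫ z : ℂ, fderiv ℝ P z Complex.I)
        = (∫ z : ℂ, 2*((starRingEnd ℂ) (f z) * fy z).re * G z)
          - ∫ z : ℂ, ‖f z‖^2 * (G z)^2 := by
      rw [← integral_sub hint1 hint2]
      exact integral_congr_ae (Filter.Eventually.of_forall (fun z => hPder z))
    rw [h0] at h1
    linarith [h1]
  -- pointwise bound
  have hpt : ∀ z, 2*((starRingEnd ℂ) (f z) * fy z).re * G z
      ≤ (1/2)*(‖f z‖^2 * (G z)^2) + 4*‖wdb f z‖^2 + 4*‖wd f z‖^2 := by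
    intro z
    by_cases hz : f z = 0
    · have h0 : ((starRingEnd ℂ) (f z) * fy z).re = 0 := by rw [hz]; simp
      rw [h0]
      have h1 : 0 ≤ (1/2)*(‖f z‖^2 * (G z)^2) :=
        mul_nonneg (by norm_num) (mul_nonneg (sq_nonneg _) (sq_nonneg _))
      have h2 : 0 ≤ 4*‖wdb f z‖^2 := by positivity
      have h3 : 0 ≤ 4*‖wd f z‖^2 := by positivity
      simp only [mul_zero, zero_mul]
      linarith
    · have hzK : z ∈ tsupport f := subset_tsupport f (by simpa using hz)
      have him : δ < z.im := hKδ z hzK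
      have hG : G z = (z.im)⁻¹ := hGeq z him
      have hGnn : 0 ≤ G z := by rw [hG]; exact inv_nonneg.mpr (by linarith)
      have hfyeq : fy z = -Complex.I * (wdb f z - wd f z) := by
        show fy z = -Complex.I * ((fx z + Complex.I * fy z)/2 - (fx z - Complex.I * fy z)/2)
        field_simp
        ring_nf
        rw [Complex.I_sq]
        ring
      have hre : ((starRingEnd ℂ) (f z) * fy z).re ≤ ‖f z‖ * (‖wdb f z‖ + ‖wd f z‖) := by
        calc ((starRingEnd ℂ) (f z) * fy z).re ≤ ‖(starRingEnd ℂ) (f z) * fy z‖ :=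
              Complex.re_le_norm _
          _ = ‖f z‖ * ‖fy z‖ := by
              rw [norm_mul]
              simp
          _ ≤ ‖f z‖ * (‖wdb f z‖ + ‖wd f z‖) := by
              apply mul_le_mul_of_nonneg_left _ (norm_nonneg _)
              rw [hfyeq]
              rw [norm_mul]
              simp only [norm_neg, Complex.norm_I, one_mul]
              exact norm_sub_le _ _
      have hfn : 0 ≤ ‖f z‖ := norm_nonneg _
      have hbn : 0 ≤ ‖wdb f z‖ := norm_nonneg _
      have hdn : 0 ≤ ‖wd f z‖ := norm_nonneg _
      nlinarith [sq_nonneg (‖f z‖ * G z / 2 - 2 * ‖wdb f z‖),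
        sq_nonneg (‖f z‖ * G z / 2 - 2 * ‖wd f z‖),
        mul_le_mul_of_nonneg_right hre (mul_nonneg (by norm_num : (0:ℝ) ≤ 2) hGnn)]
  -- assemble the main bound
  have hD : (∫ z : ℂ, ‖wd f z‖^2) = ∫ z : ℂ, ‖wdb f z‖^2 := HardyAux.wd_eq_wdb f hf hsupp
  have hmono : (∫ z : ℂ, 2*((starRingEnd ℂ) (f z) * fy z).re * G z)
      ≤ ∫ z : ℂ, ((1/2)*(‖f z‖^2 * (G z)^2) + 4*‖wdb f z‖^2 + 4*‖wd f z‖^2) := by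
    apply integral_mono hint1 _ hpt
    exact (((hint2.const_mul _).add (hintwdb.const_mul _)).add (hintwd.const_mul _))
  have hsplit : (∫ z : ℂ, ((1/2)*(‖f z‖^2 * (G z)^2) + 4*‖wdb f z‖^2 + 4*‖wd f z‖^2))
      = (1/2) * (∫ z : ℂ, ‖f z‖^2 * (G z)^2) + 4 * (∫ z : ℂ, ‖wdb f z‖^2)
        + 4 * (∫ z : ℂ, ‖wd f z‖^2) := by
    have i12 : Integrable (fun z : ℂ => (1/2)*(‖f z‖^2 * (G z)^2) + 4*‖wdb f z‖^2) :=
      (hint2.const_mul _).add (hintwdb.const_mul _)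
    rw [integral_add i12 (hintwd.const_mul 4),
      integral_add (hint2.const_mul ((1:ℝ)/2)) (hintwdb.const_mul 4),
      integral_const_mul, integral_const_mul, integral_const_mul]
  have hmain : (∫ z : ℂ, ‖f z‖^2 * (G z)^2) ≤ 16 * ∫ z : ℂ, ‖wdb f z‖^2 := by
    have h1 := hibp.le.trans (hmono.trans hsplit.le)
    rw [hD] at h1
    linarith
  -- convert the set integrals
  have hlhs : (∫ z in UHP, ‖f z‖ ^ 2 / z.im ^ 2) = ∫ z : ℂ, ‖f z‖^2 * (G z)^2 := by
    have heq : (fun z : ℂ => ‖f z‖ ^ 2 / z.im ^ 2) = fun z => ‖f z‖^2 * (G z)^2 := by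
      funext z
      by_cases hz : f z = 0
      · rw [hz]; simp
      · have hzK : z ∈ tsupport f := subset_tsupport f (by simpa using hz)
        rw [hGeq z (hKδ z hzK)]
        rw [div_eq_mul_inv, ← inv_pow]
    rw [heq]
    apply setIntegral_eq_integral_of_forall_compl_eq_zero
    intro z hz
    have : z ∉ tsupport f := fun h => hz (hUHP h)
    rw [(hzero z this).1]; simp
  have hrhs : (∫ z in UHP, ‖wdb f z‖ ^ 2) = ∫ z : ℂ, ‖wdb f z‖^2 := by
    apply setIntegral_eq_integral_of_forall_compl_eq_zero
    intro z hz
    have : z ∉ tsupport f := fun h => hz (hUHP h)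
    rw [hwdb0 z this]; simp
  rw [hlhs, hrhs]
  have hpinn : (0:ℝ) ≤ Real.pi⁻¹ := by positivity
  calc Real.pi⁻¹ * ∫ z : ℂ, ‖f z‖^2 * (G z)^2
      ≤ Real.pi⁻¹ * (16 * ∫ z : ℂ, ‖wdb f z‖^2) := mul_le_mul_of_nonneg_left hmain hpinn
    _ = 16 * (Real.pi⁻¹ * ∫ z : ℂ, ‖wdb f z‖^2) := by ring
end

section
/- Let 1 < p < ∞ and let B > 0 be a constant such that for every smooth compactly supported g : ℂ → ℂ one has ‖∂g‖_{L^p(ℂ,dA)} ≤ B·‖∂̄g‖_{L^p(ℂ,dA)}. Set A(p) = max{1, 2^{p/2 - 1}}. Then for every smooth compactly supported f : ℂ₊ → ℂ one has ∫_{ℂ₊} |f(z)|^p / (Im z)^p dA(z) ≤ 2^{p/2} (1 - 1/p)^{-p} A(p) (1 + B^p) ∫_{ℂ₊} |∂̄f(z)|^p dA(z). -/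
open MeasureTheory Complex

open scoped ENNReal

-- lintegral over ℂ as iterated integral
lemma lintegral_complex_eq (F : ℂ → ℝ≥0∞) (hF : Measurable F) :
    ∫⁻ z, F z = ∫⁻ x : ℝ, ∫⁻ y : ℝ, F (x + y * I) := by
  have mp := (Complex.volume_preserving_equiv_real_prod).symm
  rw [← mp.lintegral_comp hF]
  rw [MeasureTheory.Measure.volume_eq_prod ℝ ℝ,
    MeasureTheory.lintegral_prod (fun w => F (Complex.measurableEquivRealProd.symm w))
    ((hF.comp Complex.measurableEquivRealProd.symm.measurable).aemeasurable)]
  congr 1; ext x; congr 1; ext y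
  congr 1
  simp [Complex.measurableEquivRealProd_symm_apply, Complex.mk_eq_add_mul_I]

-- scaling
lemma lintegral_scale (W : ℝ → ℝ≥0∞) (hW : Measurable W) {s : ℝ} (hs : 0 < s) :
    ∫⁻ y : ℝ, W (s * y) = ENNReal.ofReal s⁻¹ * ∫⁻ y, W y := by
  have : ∫⁻ y : ℝ, W (s * y) = ∫⁻ t, W t ∂(Measure.map (s * ·) volume) :=
    (lintegral_map hW (measurable_const_mul s)).symm
  rw [this, Real.map_volume_mul_left hs.ne', lintegral_smul_measure,
    abs_of_pos (inv_pos.2 hs), smul_eq_mul]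

-- the power integral
lemma lintegral_Ioc_rpow {r : ℝ} (hr : -1 < r) :
    ∫⁻ s in Set.Ioc (0:ℝ) 1, ENNReal.ofReal (s ^ r) = ENNReal.ofReal (1 / (r + 1)) := by
  have hint : IntegrableOn (fun s : ℝ => s ^ r) (Set.Ioc 0 1) := by
    have := intervalIntegral.intervalIntegrable_rpow' (a := 0) (b := 1) hr
    rwa [intervalIntegrable_iff, Set.uIoc_of_le zero_le_one] at this
  rw [← ofReal_integral_eq_lintegral_ofReal hint]
  · congr 1
    rw [← intervalIntegral.integral_of_le zero_le_one]
    rw [integral_rpow (Or.inl hr)]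
    rw [Real.one_rpow, Real.zero_rpow (by linarith)]
    ring
  · filter_upwards [ae_restrict_mem measurableSet_Ioc] with s hs
    exact Real.rpow_nonneg hs.1.le _

lemma lintegral_Ioc_rpow' {r : ℝ} (hr : -1 < r) :
    ∫⁻ s in Set.Ioc (0:ℝ) 1, (ENNReal.ofReal s) ^ r = ENNReal.ofReal (1 / (r + 1)) := by
  have h1 : ∫⁻ s in Set.Ioc (0:ℝ) 1, (ENNReal.ofReal s) ^ r
      = ∫⁻ s in Set.Ioc (0:ℝ) 1, ENNReal.ofReal (s ^ r) := by
    refine setLIntegral_congr_fun measurableSet_Ioc ?_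
    intro s hs
    exact ENNReal.ofReal_rpow_of_pos hs.1
  have hint : IntegrableOn (fun s : ℝ => s ^ r) (Set.Ioc 0 1) := by
    have := intervalIntegral.intervalIntegrable_rpow' (a := 0) (b := 1) hr
    rwa [intervalIntegrable_iff, Set.uIoc_of_le zero_le_one] at this
  rw [h1, ← ofReal_integral_eq_lintegral_ofReal hint]
  · congr 1
    rw [← intervalIntegral.integral_of_le zero_le_one, integral_rpow (Or.inl hr),
      Real.one_rpow, Real.zero_rpow (by linarith)]
    ring
  · filter_upwards [ae_restrict_mem measurableSet_Ioc] with s hs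
    exact Real.rpow_nonneg hs.1.le _

lemma hoelder_step (p : ℝ) (hp : 1 < p) (G : ℝ → ℝ≥0∞) (hG : Measurable G) :
    (∫⁻ s in Set.Ioc (0:ℝ) 1, G s) ^ p ≤
      ENNReal.ofReal (p / (p - 1)) ^ (p - 1) *
        ∫⁻ s in Set.Ioc (0:ℝ) 1, G s ^ p * (ENNReal.ofReal s) ^ ((p - 1) / p) := by
  have hp0 : (0:ℝ) < p := lt_trans one_pos hp
  have hp1 : (0:ℝ) < p - 1 := by linarith
  set a : ℝ := (p - 1) / p ^ 2 with ha
  set q : ℝ := p / (p - 1) with hq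
  have hpq : p.HolderConjugate q := Real.HolderConjugate.conjExponent hp
  set F1 : ℝ → ℝ≥0∞ := fun s => G s * (ENNReal.ofReal s) ^ a with hF1
  set F2 : ℝ → ℝ≥0∞ := fun s => (ENNReal.ofReal s) ^ (-a) with hF2
  have hmo : Measurable fun s : ℝ => ENNReal.ofReal s := measurable_id.ennreal_ofReal
  have hmF1 : Measurable F1 := hG.mul (ENNReal.continuous_rpow_const.measurable.comp hmo)
  have hmF2 : Measurable F2 := ENNReal.continuous_rpow_const.measurable.comp hmo
  have hne : ∀ s : ℝ, s ∈ Set.Ioc (0:ℝ) 1 → ENNReal.ofReal s ≠ 0 ∧ ENNReal.ofReal s ≠ ⊤ :=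
    fun s hs => ⟨(ENNReal.ofReal_pos.2 hs.1).ne', ENNReal.ofReal_ne_top⟩
  have step1 : ∫⁻ s in Set.Ioc (0:ℝ) 1, G s = ∫⁻ s in Set.Ioc (0:ℝ) 1, (F1 * F2) s := by
    refine setLIntegral_congr_fun measurableSet_Ioc ?_
    intro s hs
    have := hne s hs
    simp only [hF1, hF2, Pi.mul_apply]
    rw [mul_assoc, ← ENNReal.rpow_add _ _ this.1 this.2, add_neg_cancel, ENNReal.rpow_zero,
      mul_one]
  have step2 := ENNReal.lintegral_mul_le_Lp_mul_Lq (volume.restrict (Set.Ioc (0:ℝ) 1)) hpq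
    hmF1.aemeasurable hmF2.aemeasurable
  have hA : ∫⁻ s in Set.Ioc (0:ℝ) 1, F1 s ^ p
      = ∫⁻ s in Set.Ioc (0:ℝ) 1, G s ^ p * (ENNReal.ofReal s) ^ ((p - 1) / p) := by
    refine setLIntegral_congr_fun measurableSet_Ioc ?_
    intro s hs
    simp only [hF1]
    rw [ENNReal.mul_rpow_of_nonneg _ _ hp0.le, ← ENNReal.rpow_mul]
    congr 2
    rw [ha]; field_simp
  have hB : ∫⁻ s in Set.Ioc (0:ℝ) 1, F2 s ^ q = ENNReal.ofReal q := by
    have e1 : ∫⁻ s in Set.Ioc (0:ℝ) 1, F2 s ^ q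
        = ∫⁻ s in Set.Ioc (0:ℝ) 1, (ENNReal.ofReal s) ^ (-(1/p)) := by
      refine setLIntegral_congr_fun measurableSet_Ioc ?_
      intro s hs
      simp only [hF2]
      rw [← ENNReal.rpow_mul]
      congr 1
      rw [ha, hq]; field_simp
    have hop : (1:ℝ)/p < 1 := by rw [div_lt_one hp0]; exact hp
    rw [e1, lintegral_Ioc_rpow' (by linarith)]
    congr 1
    rw [hq]; field_simp
    rw [show (-1+p : ℝ) = p-1 by ring, div_self (by linarith : (p-1:ℝ) ≠ 0)]
  calc (∫⁻ s in Set.Ioc (0:ℝ) 1, G s) ^ p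
      = (∫⁻ s in Set.Ioc (0:ℝ) 1, (F1 * F2) s) ^ p := by rw [step1]
    _ ≤ ((∫⁻ s in Set.Ioc (0:ℝ) 1, F1 s ^ p) ^ (1/p)
          * (∫⁻ s in Set.Ioc (0:ℝ) 1, F2 s ^ q) ^ (1/q)) ^ p :=
        ENNReal.rpow_le_rpow step2 hp0.le
    _ = (∫⁻ s in Set.Ioc (0:ℝ) 1, F1 s ^ p) * ENNReal.ofReal q ^ (p-1) := by
        rw [ENNReal.mul_rpow_of_nonneg _ _ hp0.le, ← ENNReal.rpow_mul, ← ENNReal.rpow_mul,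
          one_div_mul_cancel hp0.ne', ENNReal.rpow_one, hB]
        congr 2
        rw [hq]; field_simp
    _ = ENNReal.ofReal q ^ (p-1) * ∫⁻ s in Set.Ioc (0:ℝ) 1, G s ^ p * (ENNReal.ofReal s) ^ ((p - 1) / p) := by
        rw [hA, mul_comm]

lemma ftc_bound (f : ℂ → ℂ) (hf : ContDiff ℝ (⊤ : ℕ∞) f) (hUHP : tsupport f ⊆ UHP)
    (x y : ℝ) (hy : 0 < y) :
    ‖f (x + y * I)‖ ≤ y * ∫ s in (0:ℝ)..1, ‖fderiv ℝ f (x + (s * y) * I) I‖ := by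
  have hfd : Differentiable ℝ f := hf.differentiable (by simp)
  have hvc : Continuous fun z => fderiv ℝ f z I :=
    (hf.continuous_fderiv (by simp)).clm_apply continuous_const
  have hder : ∀ t : ℝ, HasDerivAt (fun t : ℝ => f (x + t * I))
      (fderiv ℝ f (x + t * I) I) t := by
    intro t
    have h2 : HasDerivAt (fun t : ℝ => (x : ℂ) + t * I) I t := by
      simpa using (((Complex.ofRealCLM.hasDerivAt (x := t)).mul_const I).const_add (x : ℂ))
    exact (hfd (x + t * I)).hasFDerivAt.comp_hasDerivAt t h2
  have hcont : Continuous fun t : ℝ => fderiv ℝ f (x + t * I) I :=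
    hvc.comp (by continuity)
  have hkey : f (x + y * I) = ∫ t in (0:ℝ)..y, fderiv ℝ f (x + t * I) I := by
    have := intervalIntegral.integral_eq_sub_of_hasDerivAt
      (f := fun t : ℝ => f (x + t * I)) (fun t _ => hder t)
      (hcont.intervalIntegrable 0 y)
    rw [this]
    show f (↑x + ↑y * I) = f (↑x + ↑y * I) - f (↑x + (0:ℝ) * I)
    have hx0 : f ((x : ℂ) + (0:ℝ) * I) = 0 := by
      have : (x : ℂ) + (0:ℝ) * I ∉ tsupport f := by
        intro h
        have := hUHP h
        simp [UHP] at this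
      simpa using image_eq_zero_of_notMem_tsupport this
    simp only [hx0, sub_zero]
  have hsub : ∫ s in (0:ℝ)..1, ‖fderiv ℝ f (x + (s * y) * I) I‖
      = y⁻¹ • ∫ t in (0:ℝ)..y, ‖fderiv ℝ f (x + t * I) I‖ := by
    have := intervalIntegral.integral_comp_mul_right
      (fun t : ℝ => ‖fderiv ℝ f (x + t * I) I‖) (a := 0) (b := 1) (c := y)
    have h2 := this hy.ne'
    simp only [zero_mul, one_mul] at h2
    push_cast at h2
    rw [h2]
  rw [hkey, hsub]
  rw [smul_eq_mul, ← mul_assoc, mul_inv_cancel₀ hy.ne', one_mul]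
  exact intervalIntegral.norm_integral_le_integral_norm hy.le

lemma hardy_core (p : ℝ) (hp : 1 < p) (f : ℂ → ℂ) (hf : ContDiff ℝ (⊤ : ℕ∞) f)
    (hsupp : HasCompactSupport f) (hUHP : tsupport f ⊆ UHP) :
    ∫⁻ z in UHP, ENNReal.ofReal (‖f z‖ ^ p / z.im ^ p) ≤
      ENNReal.ofReal ((p / (p - 1)) ^ p) *
        ∫⁻ z, ENNReal.ofReal ‖fderiv ℝ f z I‖ ^ p := by
  have hp0 : (0:ℝ) < p := lt_trans one_pos hp
  have hqc : (0:ℝ) < p / (p - 1) := div_pos hp0 (by linarith)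
  have hvc : Continuous fun z => fderiv ℝ f z I :=
    (hf.continuous_fderiv (by simp)).clm_apply continuous_const
  set nv : ℂ → ℝ≥0∞ := fun z => ENNReal.ofReal ‖fderiv ℝ f z I‖ with hnv
  have hnvm : Measurable nv := hvc.norm.measurable.ennreal_ofReal
  set J : ℝ≥0∞ := ∫⁻ z, nv z ^ p with hJ
  set w : ℝ → ℝ≥0∞ := fun s => (ENNReal.ofReal s) ^ ((p - 1) / p) with hw
  have hwm : Measurable w := ENNReal.continuous_rpow_const.measurable.comp
    measurable_id.ennreal_ofReal
  have hwnetop : ∀ s, w s ≠ ⊤ := fun s =>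
    ENNReal.rpow_ne_top_of_nonneg (div_nonneg (by linarith) hp0.le) ENNReal.ofReal_ne_top
  set c1 : ℝ≥0∞ := ENNReal.ofReal (p / (p - 1)) ^ (p - 1) with hc1
  have hc1top : c1 ≠ ⊤ := ENNReal.rpow_ne_top_of_nonneg (by linarith) ENNReal.ofReal_ne_top
  have hUm : MeasurableSet UHP := by
    have : UHP = Complex.im ⁻¹' Set.Ioi 0 := rfl
    rw [this]; exact Complex.measurable_im measurableSet_Ioi
  have hFm : Measurable fun z : ℂ => ENNReal.ofReal (‖f z‖ ^ p / z.im ^ p) := by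
    apply Measurable.ennreal_ofReal
    exact ((hf.continuous.norm.rpow_const (fun x => Or.inr hp0.le)).measurable).div
      ((Real.continuous_rpow_const hp0.le).comp Complex.continuous_im).measurable
  -- conversion to iterated integral with indicator
  have step0 : ∫⁻ z in UHP, ENNReal.ofReal (‖f z‖ ^ p / z.im ^ p)
      = ∫⁻ x : ℝ, ∫⁻ y : ℝ,
          UHP.indicator (fun z => ENNReal.ofReal (‖f z‖ ^ p / z.im ^ p)) (x + y * I) := by
    rw [← lintegral_indicator hUm]
    exact lintegral_complex_eq _ (hFm.indicator hUm)
  -- pointwise bound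
  have step1 : ∀ x y : ℝ,
      UHP.indicator (fun z => ENNReal.ofReal (‖f z‖ ^ p / z.im ^ p)) (x + y * I)
        ≤ (∫⁻ s in Set.Ioc (0:ℝ) 1, nv (x + (s * y) * I)) ^ p := by
    intro x y
    by_cases hy : (0:ℝ) < y
    · have hmem : (x + y * I : ℂ) ∈ UHP := by
        show (0:ℝ) < (x + y * I : ℂ).im
        simpa using hy
      rw [Set.indicator_of_mem hmem]
      have him : (x + y * I : ℂ).im = y := by simp
      rw [him]
      have hT : (0:ℝ) ≤ ∫ s in (0:ℝ)..1, ‖fderiv ℝ f (x + (s * y) * I) I‖ :=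
        intervalIntegral.integral_nonneg zero_le_one (fun s _ => norm_nonneg _)
      have hb : ‖f (x + y * I)‖ / y ≤ ∫ s in (0:ℝ)..1, ‖fderiv ℝ f (x + (s * y) * I) I‖ := by
        rw [div_le_iff₀ hy]
        have := ftc_bound f hf hUHP x y hy
        linarith
      have e1 : ‖f (x + y * I)‖ ^ p / y ^ p = (‖f (x + y * I)‖ / y) ^ p :=
        (Real.div_rpow (norm_nonneg _) hy.le p).symm
      rw [e1]
      have e2 : ENNReal.ofReal ((‖f (x + y * I)‖ / y) ^ p)
          ≤ ENNReal.ofReal ((∫ s in (0:ℝ)..1, ‖fderiv ℝ f (x + (s * y) * I) I‖) ^ p) :=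
        ENNReal.ofReal_le_ofReal
          (Real.rpow_le_rpow (div_nonneg (norm_nonneg _) hy.le) hb hp0.le)
      refine e2.trans (le_of_eq ?_)
      rw [← ENNReal.ofReal_rpow_of_nonneg hT hp0.le]
      congr 1
      rw [intervalIntegral.integral_of_le zero_le_one,
        ofReal_integral_eq_lintegral_ofReal]
      · exact ((hvc.norm.comp (by continuity)).integrableOn_Ioc)
      · exact Filter.Eventually.of_forall (fun s => norm_nonneg _)
    · have hnmem : (x + y * I : ℂ) ∉ UHP := by
        simp only [UHP, Set.mem_setOf_eq, Complex.add_im]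
        simp; linarith [not_lt.mp hy]
      rw [Set.indicator_of_notMem hnmem]
      exact zero_le
  have step2 : ∀ x y : ℝ,
      (∫⁻ s in Set.Ioc (0:ℝ) 1, nv (x + (s * y) * I)) ^ p ≤
        c1 * ∫⁻ s in Set.Ioc (0:ℝ) 1, nv (x + (s * y) * I) ^ p * w s := by
    intro x y
    exact hoelder_step p hp _ (hnvm.comp (Continuous.measurable (by fun_prop)))
  have step3 : ∫⁻ z in UHP, ENNReal.ofReal (‖f z‖ ^ p / z.im ^ p)
      ≤ c1 * ∫⁻ x : ℝ, ∫⁻ y : ℝ, ∫⁻ s in Set.Ioc (0:ℝ) 1,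
          nv (x + (s * y) * I) ^ p * w s := by
    rw [step0, ← lintegral_const_mul' _ _ hc1top]
    refine lintegral_mono (fun x => ?_)
    rw [← lintegral_const_mul' _ _ hc1top]
    refine lintegral_mono (fun y => ?_)
    exact le_trans (step1 x y) (step2 x y)
  -- swap y and s
  have hnvp : ∀ x : ℝ, Measurable fun q : ℝ × ℝ => nv (x + (q.2 * q.1) * I) ^ p :=
    fun x => ENNReal.continuous_rpow_const.measurable.comp
      (hnvm.comp (Continuous.measurable (by fun_prop)))
  have swap1 : ∀ x : ℝ, ∫⁻ y : ℝ, ∫⁻ s in Set.Ioc (0:ℝ) 1, nv (x + (s * y) * I) ^ p * w s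
      = ∫⁻ s in Set.Ioc (0:ℝ) 1, (∫⁻ y : ℝ, nv (x + (s * y) * I) ^ p) * w s := by
    intro x
    rw [lintegral_lintegral_swap]
    · congr 1; ext s
      exact lintegral_mul_const' _ _ (hwnetop s)
    · exact ((hnvp x).mul (hwm.comp measurable_snd)).aemeasurable
  -- swap x and s
  have hinner : Measurable fun q : ℝ × ℝ => (∫⁻ y : ℝ, nv (q.1 + (q.2 * y) * I) ^ p) * w q.2 := by
    refine Measurable.mul ?_ (hwm.comp measurable_snd)
    apply Measurable.lintegral_prod_right (f := fun (q : ℝ × ℝ) (y : ℝ) => nv (q.1 + (q.2 * y) * I) ^ p)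
    exact ENNReal.continuous_rpow_const.measurable.comp
      (hnvm.comp (Continuous.measurable (by fun_prop)))
  have swap2 : ∫⁻ x : ℝ, ∫⁻ s in Set.Ioc (0:ℝ) 1, (∫⁻ y : ℝ, nv (x + (s * y) * I) ^ p) * w s
      = ∫⁻ s in Set.Ioc (0:ℝ) 1, ∫⁻ x : ℝ, (∫⁻ y : ℝ, nv (x + (s * y) * I) ^ p) * w s := by
    rw [lintegral_lintegral_swap]
    exact hinner.aemeasurable
  -- evaluate the inner integrals for s ∈ Ioc 0 1
  have hJfull : ∫⁻ x : ℝ, ∫⁻ y : ℝ, nv (x + y * I) ^ p = J := by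
    rw [hJ]
    exact (lintegral_complex_eq (fun z => nv z ^ p)
      (ENNReal.continuous_rpow_const.measurable.comp hnvm)).symm
  have eval1 : ∫⁻ s in Set.Ioc (0:ℝ) 1, ∫⁻ x : ℝ, (∫⁻ y : ℝ, nv (x + (s * y) * I) ^ p) * w s
      = ∫⁻ s in Set.Ioc (0:ℝ) 1, (ENNReal.ofReal s) ^ (-(1/p)) * J := by
    refine setLIntegral_congr_fun measurableSet_Ioc ?_
    intro s hs
    have hs0 : (0:ℝ) < s := hs.1
    have hxint : ∀ x : ℝ, (∫⁻ y : ℝ, nv (x + (s * y) * I) ^ p)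
        = ENNReal.ofReal s⁻¹ * ∫⁻ y : ℝ, nv (x + y * I) ^ p := by
      intro x
      have hW : Measurable fun t : ℝ => nv (x + t * I) ^ p :=
        ENNReal.continuous_rpow_const.measurable.comp
          (hnvm.comp (Continuous.measurable (by fun_prop)))
      have := lintegral_scale (fun t : ℝ => nv (x + t * I) ^ p) hW hs0
      rw [← this]
      congr 1; ext y
      norm_cast
    calc ∫⁻ x : ℝ, (∫⁻ y : ℝ, nv (x + (s * y) * I) ^ p) * w s
        = ∫⁻ x : ℝ, (ENNReal.ofReal s⁻¹ * ∫⁻ y : ℝ, nv (x + y * I) ^ p) * w s := by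
          congr 1; ext x; rw [hxint x]
      _ = (ENNReal.ofReal s⁻¹ * J) * w s := by
          rw [lintegral_mul_const' _ _ (hwnetop s), lintegral_const_mul' _ _ ENNReal.ofReal_ne_top,
            hJfull]
      _ = (ENNReal.ofReal s) ^ (-(1/p)) * J := by
          rw [ENNReal.ofReal_inv_of_pos hs0, ← ENNReal.rpow_neg_one (ENNReal.ofReal s)]
          rw [mul_comm _ (w s), ← mul_assoc, hw]
          simp only
          rw [← ENNReal.rpow_add _ _ (ENNReal.ofReal_pos.2 hs0).ne' ENNReal.ofReal_ne_top]
          congr 2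
          field_simp
          ring
  -- final assembly
  have heval2 : ∫⁻ s in Set.Ioc (0:ℝ) 1, (ENNReal.ofReal s) ^ (-(1/p)) * J
      = ENNReal.ofReal (p / (p - 1)) * J := by
    have hmeas : Measurable fun s : ℝ => (ENNReal.ofReal s) ^ (-(1/p)) :=
      ENNReal.continuous_rpow_const.measurable.comp measurable_id.ennreal_ofReal
    have hr : (-1 : ℝ) < -(1/p) := by
      have : 1/p < 1 := by rw [div_lt_one hp0]; exact hp
      linarith
    calc ∫⁻ s in Set.Ioc (0:ℝ) 1, (ENNReal.ofReal s) ^ (-(1/p)) * J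
        = (∫⁻ s in Set.Ioc (0:ℝ) 1, (ENNReal.ofReal s) ^ (-(1/p))) * J :=
          lintegral_mul_const _ hmeas
      _ = ENNReal.ofReal (1 / (-(1/p) + 1)) * J := by rw [lintegral_Ioc_rpow' hr]
      _ = ENNReal.ofReal (p / (p - 1)) * J := by
          congr 2
          rw [div_eq_div_iff (by linarith) (by linarith)]
          field_simp
          ring
  calc ∫⁻ z in UHP, ENNReal.ofReal (‖f z‖ ^ p / z.im ^ p)
      ≤ c1 * ∫⁻ x : ℝ, ∫⁻ y : ℝ, ∫⁻ s in Set.Ioc (0:ℝ) 1,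
          nv (x + (s * y) * I) ^ p * w s := step3
    _ = c1 * (ENNReal.ofReal (p / (p - 1)) * J) := by
        rw [show (∫⁻ x : ℝ, ∫⁻ y : ℝ, ∫⁻ s in Set.Ioc (0:ℝ) 1, nv (x + (s * y) * I) ^ p * w s)
            = ∫⁻ x : ℝ, ∫⁻ s in Set.Ioc (0:ℝ) 1, (∫⁻ y : ℝ, nv (x + (s * y) * I) ^ p) * w s
          from by congr 1; ext x; exact swap1 x]
        rw [swap2, eval1, heval2]
    _ = ENNReal.ofReal ((p / (p - 1)) ^ p) * J := by
        rw [← mul_assoc]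
        congr 1
        have hx0 : ENNReal.ofReal (p / (p - 1)) ≠ 0 := (ENNReal.ofReal_pos.2 hqc).ne'
        calc c1 * ENNReal.ofReal (p / (p - 1))
            = ENNReal.ofReal (p / (p - 1)) ^ (p - 1)
              * ENNReal.ofReal (p / (p - 1)) ^ (1:ℝ) := by rw [ENNReal.rpow_one, hc1]
          _ = ENNReal.ofReal (p / (p - 1)) ^ (p - 1 + 1) :=
              (ENNReal.rpow_add _ _ hx0 ENNReal.ofReal_ne_top).symm
          _ = ENNReal.ofReal (p / (p - 1)) ^ p := by ring_nf
          _ = ENNReal.ofReal ((p / (p - 1)) ^ p) := ENNReal.ofReal_rpow_of_pos hqc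


/-- let `1 < p < ∞` and `B > 0` be such that
`‖∂g‖_p ≤ B ‖∂̄g‖_p` for every test function `g` on `ℂ`, and set
`A(p) = max{1, 2^{p/2-1}}`. Then every smooth `f` with compact support in `ℂ₊`
satisfies `∫_{ℂ₊} |f|^p/(Im z)^p dA ≤ 2^{p/2}(1-1/p)^{-p} A(p)(1+B^p) ∫_{ℂ₊} |∂̄f|^p dA`. -/
theorem hardy_inequality_dbar (p B : ℝ) (hp : 1 < p) (hB : 0 < B)
    (hBeur : ∀ g : ℂ → ℂ, ContDiff ℝ (⊤ : ℕ∞) g → HasCompactSupport g →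
      (Real.pi⁻¹ * ∫ z : ℂ, ‖wd g z‖ ^ p) ^ (1 / p) ≤
        B * (Real.pi⁻¹ * ∫ z : ℂ, ‖wdb g z‖ ^ p) ^ (1 / p))
    (f : ℂ → ℂ) (hf : ContDiff ℝ (⊤ : ℕ∞) f) (hsupp : HasCompactSupport f)
    (hUHP : tsupport f ⊆ UHP) :
    Real.pi⁻¹ * ∫ z in UHP, ‖f z‖ ^ p / z.im ^ p ≤
      (2 : ℝ) ^ (p / 2) * (1 - 1 / p) ^ (-p) * max 1 ((2 : ℝ) ^ (p / 2 - 1)) *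
        (1 + B ^ p) * (Real.pi⁻¹ * ∫ z in UHP, ‖wdb f z‖ ^ p) := by
  have hp0 : (0:ℝ) < p := lt_trans one_pos hp
  have hqc : (0:ℝ) < p / (p - 1) := div_pos hp0 (by linarith)
  have hC : Continuous (fderiv ℝ f) := hf.continuous_fderiv (by simp)
  have hv1 : Continuous fun z => fderiv ℝ f z 1 := hC.clm_apply continuous_const
  have hvI : Continuous fun z => fderiv ℝ f z I := hC.clm_apply continuous_const
  have hwdc : Continuous (wd f) := by
    unfold wd; exact (hv1.sub (continuous_const.mul hvI)).div_const 2
  have hwdbc : Continuous (wdb f) := by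
    unfold wdb; exact (hv1.add (continuous_const.mul hvI)).div_const 2
  have hfz : ∀ z, z ∉ UHP → fderiv ℝ f z = 0 := by
    intro z hz
    by_contra h
    exact hz (hUHP (support_fderiv_subset (𝕜 := ℝ) (Function.mem_support.2 h)))
  have hwd0 : ∀ z, z ∉ UHP → wd f z = 0 := by
    intro z hz; unfold wd; rw [hfz z hz]; simp
  have hwdb0 : ∀ z, z ∉ UHP → wdb f z = 0 := by
    intro z hz; unfold wdb; rw [hfz z hz]; simp
  have hfz' : ∀ z, z ∉ tsupport f → fderiv ℝ f z = 0 := by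
    intro z hz
    by_contra h
    exact hz (support_fderiv_subset (𝕜 := ℝ) (Function.mem_support.2 h))
  have hsupwd : HasCompactSupport (wd f) := by
    apply HasCompactSupport.intro hsupp
    intro z hz; unfold wd; rw [hfz' z hz]; simp
  have hsupwdb : HasCompactSupport (wdb f) := by
    apply HasCompactSupport.intro hsupp
    intro z hz; unfold wdb; rw [hfz' z hz]; simp
  -- integrability of the p-th powers
  have hcont_pow : ∀ g : ℂ → ℂ, Continuous g → Continuous fun z => ‖g z‖ ^ p :=
    fun g hg => hg.norm.rpow_const (fun x => Or.inr hp0.le)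
  have hint_wd : Integrable (fun z => ‖wd f z‖ ^ p) := by
    apply Continuous.integrable_of_hasCompactSupport (hcont_pow _ hwdc)
    apply HasCompactSupport.intro (hsupwd)
    intro z hz
    rw [image_eq_zero_of_notMem_tsupport hz, norm_zero, Real.zero_rpow hp0.ne']
  have hint_wdb : Integrable (fun z => ‖wdb f z‖ ^ p) := by
    apply Continuous.integrable_of_hasCompactSupport (hcont_pow _ hwdbc)
    apply HasCompactSupport.intro (hsupwdb)
    intro z hz
    rw [image_eq_zero_of_notMem_tsupport hz, norm_zero, Real.zero_rpow hp0.ne']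
  -- real consequence of the Beurling hypothesis
  set X : ℝ := ∫ z : ℂ, ‖wd f z‖ ^ p with hX
  set Y : ℝ := ∫ z : ℂ, ‖wdb f z‖ ^ p with hY
  have hXnn : 0 ≤ X := integral_nonneg fun z => Real.rpow_nonneg (norm_nonneg _) _
  have hYnn : 0 ≤ Y := integral_nonneg fun z => Real.rpow_nonneg (norm_nonneg _) _
  have hpinn : (0:ℝ) < Real.pi⁻¹ := inv_pos.2 Real.pi_pos
  have hBB : X ≤ B ^ p * Y := by
    have h0 := hBeur f hf hsupp
    have h1 : ((Real.pi⁻¹ * X) ^ (1/p)) ^ p ≤ ((B * (Real.pi⁻¹ * Y) ^ (1/p))) ^ p :=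
      Real.rpow_le_rpow (Real.rpow_nonneg (by positivity) _) h0 hp0.le
    rw [← Real.rpow_mul (by positivity), one_div_mul_cancel hp0.ne', Real.rpow_one,
      Real.mul_rpow hB.le (Real.rpow_nonneg (by positivity) _),
      ← Real.rpow_mul (by positivity), one_div_mul_cancel hp0.ne', Real.rpow_one] at h1
    have h2 : Real.pi⁻¹ * X ≤ Real.pi⁻¹ * (B ^ p * Y) := by
      calc Real.pi⁻¹ * X ≤ B ^ p * (Real.pi⁻¹ * Y) := h1
        _ = Real.pi⁻¹ * (B ^ p * Y) := by ring
    exact le_of_mul_le_mul_left h2 hpinn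
  -- lintegral versions
  have hnn : ∀ g : ℂ → ℂ, (0:ℝ → ℝ) ≤ fun z => ‖g (0:ℂ)‖ := fun g z => norm_nonneg _
  have hR : ∫⁻ z : ℂ, ENNReal.ofReal ‖wdb f z‖ ^ p = ENNReal.ofReal Y := by
    have : ∀ z : ℂ, ENNReal.ofReal ‖wdb f z‖ ^ p = ENNReal.ofReal (‖wdb f z‖ ^ p) :=
      fun z => ENNReal.ofReal_rpow_of_nonneg (norm_nonneg _) hp0.le
    simp_rw [this]
    exact (ofReal_integral_eq_lintegral_ofReal hint_wdb
      (Filter.Eventually.of_forall fun z => Real.rpow_nonneg (norm_nonneg _) _)).symm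
  have hRd : ∫⁻ z : ℂ, ENNReal.ofReal ‖wd f z‖ ^ p = ENNReal.ofReal X := by
    have : ∀ z : ℂ, ENNReal.ofReal ‖wd f z‖ ^ p = ENNReal.ofReal (‖wd f z‖ ^ p) :=
      fun z => ENNReal.ofReal_rpow_of_nonneg (norm_nonneg _) hp0.le
    simp_rw [this]
    exact (ofReal_integral_eq_lintegral_ofReal hint_wd
      (Filter.Eventually.of_forall fun z => Real.rpow_nonneg (norm_nonneg _) _)).symm
  -- Minkowski bound for J
  set J : ℝ≥0∞ := ∫⁻ z : ℂ, ENNReal.ofReal ‖fderiv ℝ f z I‖ ^ p with hJ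
  have hvle : ∀ z : ℂ, ENNReal.ofReal ‖fderiv ℝ f z I‖
      ≤ ENNReal.ofReal ‖wd f z‖ + ENNReal.ofReal ‖wdb f z‖ := by
    intro z
    rw [← ENNReal.ofReal_add (norm_nonneg _) (norm_nonneg _)]
    apply ENNReal.ofReal_le_ofReal
    have hid : wdb f z - wd f z = I * fderiv ℝ f z I := by
      unfold wd wdb; ring
    calc ‖fderiv ℝ f z I‖ = ‖I * fderiv ℝ f z I‖ := by
          rw [norm_mul, Complex.norm_I, one_mul]
      _ = ‖wdb f z - wd f z‖ := by rw [hid]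
      _ ≤ ‖wdb f z‖ + ‖wd f z‖ := norm_sub_le _ _
      _ = ‖wd f z‖ + ‖wdb f z‖ := by ring
  have hJle : J ≤ ENNReal.ofReal ((1 + B) ^ p * Y) := by
    have h1 : J ≤ ∫⁻ z : ℂ, (ENNReal.ofReal ‖wd f z‖ + ENNReal.ofReal ‖wdb f z‖) ^ p := by
      rw [hJ]
      exact lintegral_mono fun z => ENNReal.rpow_le_rpow (hvle z) hp0.le
    have h2 := ENNReal.lintegral_Lp_add_le (μ := (volume : Measure ℂ))
      (hwdc.norm.measurable.ennreal_ofReal.aemeasurable)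
      (hwdbc.norm.measurable.ennreal_ofReal.aemeasurable) hp.le
    have h3 : J ^ (1/p) ≤ ENNReal.ofReal ((1 + B) * Y ^ (1/p)) := by
      calc J ^ (1/p) ≤ (∫⁻ z : ℂ, (ENNReal.ofReal ‖wd f z‖ + ENNReal.ofReal ‖wdb f z‖) ^ p) ^ (1/p) :=
            ENNReal.rpow_le_rpow h1 (by positivity)
        _ ≤ (∫⁻ z : ℂ, ENNReal.ofReal ‖wd f z‖ ^ p) ^ (1/p)
            + (∫⁻ z : ℂ, ENNReal.ofReal ‖wdb f z‖ ^ p) ^ (1/p) := h2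
        _ = ENNReal.ofReal X ^ (1/p) + ENNReal.ofReal Y ^ (1/p) := by rw [hRd, hR]
        _ ≤ ENNReal.ofReal (B ^ p * Y) ^ (1/p) + ENNReal.ofReal Y ^ (1/p) := by
            gcongr
        _ = ENNReal.ofReal ((B ^ p * Y) ^ (1/p)) + ENNReal.ofReal (Y ^ (1/p)) := by
            rw [ENNReal.ofReal_rpow_of_nonneg (by positivity) (by positivity),
              ENNReal.ofReal_rpow_of_nonneg hYnn (by positivity)]
        _ = ENNReal.ofReal (B * Y ^ (1/p) + Y ^ (1/p)) := by
            rw [← ENNReal.ofReal_add (by positivity) (by positivity)]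
            congr 2
            rw [Real.mul_rpow (by positivity) hYnn, ← Real.rpow_mul hB.le,
              mul_one_div_cancel hp0.ne', Real.rpow_one]
        _ = ENNReal.ofReal ((1 + B) * Y ^ (1/p)) := by congr 1; ring
    calc J = (J ^ (1/p)) ^ p := by
          rw [← ENNReal.rpow_mul, one_div_mul_cancel hp0.ne', ENNReal.rpow_one]
      _ ≤ (ENNReal.ofReal ((1 + B) * Y ^ (1/p))) ^ p :=
          ENNReal.rpow_le_rpow h3 hp0.le
      _ = ENNReal.ofReal ((1 + B) ^ p * Y) := by
          rw [ENNReal.ofReal_rpow_of_nonneg (by positivity) hp0.le]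
          congr 1
          rw [Real.mul_rpow (by positivity) (by positivity), ← Real.rpow_mul hYnn,
            one_div_mul_cancel hp0.ne', Real.rpow_one]
  -- combine with the core inequality
  have hcore := hardy_core p hp f hf hsupp hUHP
  have hLle : ∫⁻ z in UHP, ENNReal.ofReal (‖f z‖ ^ p / z.im ^ p)
      ≤ ENNReal.ofReal ((p / (p - 1)) ^ p * ((1 + B) ^ p * Y)) := by
    refine hcore.trans ?_
    rw [ENNReal.ofReal_mul (Real.rpow_nonneg hqc.le _)]
    exact mul_le_mul_right hJle _
  -- convert LHS to a real integral
  have hUm : MeasurableSet UHP := by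
    have : UHP = Complex.im ⁻¹' Set.Ioi 0 := rfl
    rw [this]; exact Complex.measurable_im measurableSet_Ioi
  have hmeasL : Measurable fun z : ℂ => ‖f z‖ ^ p / z.im ^ p :=
    ((hf.continuous.norm.rpow_const (fun x => Or.inr hp0.le)).measurable).div
      ((Real.continuous_rpow_const hp0.le).comp Complex.continuous_im).measurable
  have hLreal : ∫ z in UHP, ‖f z‖ ^ p / z.im ^ p
      = (∫⁻ z in UHP, ENNReal.ofReal (‖f z‖ ^ p / z.im ^ p)).toReal := by
    apply integral_eq_lintegral_of_nonneg_ae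
    · filter_upwards [ae_restrict_mem hUm] with z hz
      have : (0:ℝ) < z.im := hz
      positivity
    · exact hmeasL.aestronglyMeasurable
  have hLfinal : ∫ z in UHP, ‖f z‖ ^ p / z.im ^ p
      ≤ (p / (p - 1)) ^ p * ((1 + B) ^ p * Y) := by
    rw [hLreal]
    refine (ENNReal.toReal_mono ENNReal.ofReal_ne_top hLle).trans_eq ?_
    exact ENNReal.toReal_ofReal (by positivity)
  -- RHS set integral equals full integral
  have hRHSeq : ∫ z in UHP, ‖wdb f z‖ ^ p = Y := by
    apply setIntegral_eq_integral_of_forall_compl_eq_zero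
    intro z hz
    rw [hwdb0 z hz, norm_zero, Real.zero_rpow hp0.ne']
  -- the numeric inequality
  have hid : (1 - 1/p) ^ (-p) = (p / (p - 1)) ^ p := by
    have h1 : (1:ℝ) - 1/p = (p - 1)/p := by field_simp
    rw [h1, Real.rpow_neg (div_nonneg (by linarith) hp0.le),
      ← Real.inv_rpow (div_nonneg (by linarith) hp0.le), inv_div]
  have hkey : (1 + B) ^ p ≤ (2:ℝ) ^ (p/2) * max 1 ((2:ℝ) ^ (p/2 - 1)) * (1 + B ^ p) := by
    have h2 : (1 + B) ^ p ≤ (2:ℝ) ^ (p - 1) * (1 + B ^ p) := by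
      have hnn := NNReal.rpow_add_le_mul_rpow_add_rpow 1 B.toNNReal hp.le
      have hcc := NNReal.coe_le_coe.2 hnn
      push_cast at hcc
      rwa [Real.coe_toNNReal B hB.le, Real.one_rpow] at hcc
    have h3 : (2:ℝ) ^ (p - 1) = (2:ℝ) ^ (p/2) * (2:ℝ) ^ (p/2 - 1) := by
      rw [← Real.rpow_add two_pos]; ring_nf
    have h4 : (2:ℝ) ^ (p/2) * (2:ℝ) ^ (p/2 - 1)
        ≤ (2:ℝ) ^ (p/2) * max 1 ((2:ℝ) ^ (p/2 - 1)) :=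
      mul_le_mul_of_nonneg_left (le_max_right _ _) (by positivity)
    calc (1 + B) ^ p ≤ (2:ℝ) ^ (p - 1) * (1 + B ^ p) := h2
      _ ≤ ((2:ℝ) ^ (p/2) * max 1 ((2:ℝ) ^ (p/2 - 1))) * (1 + B ^ p) := by
          apply mul_le_mul_of_nonneg_right _ (by positivity)
          rw [h3]; exact h4
  -- final assembly
  calc Real.pi⁻¹ * ∫ z in UHP, ‖f z‖ ^ p / z.im ^ p
      ≤ Real.pi⁻¹ * ((p / (p - 1)) ^ p * ((1 + B) ^ p * Y)) :=
        mul_le_mul_of_nonneg_left hLfinal hpinn.le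
    _ = ((p / (p - 1)) ^ p * (1 + B) ^ p) * (Real.pi⁻¹ * Y) := by ring
    _ ≤ ((2:ℝ) ^ (p/2) * (1 - 1/p) ^ (-p) * max 1 ((2:ℝ) ^ (p/2 - 1)) * (1 + B ^ p))
          * (Real.pi⁻¹ * Y) := by
        apply mul_le_mul_of_nonneg_right _ (by positivity)
        calc (p / (p - 1)) ^ p * (1 + B) ^ p
            ≤ (p / (p - 1)) ^ p * ((2:ℝ) ^ (p/2) * max 1 ((2:ℝ) ^ (p/2 - 1)) * (1 + B ^ p)) :=
              mul_le_mul_of_nonneg_left hkey (Real.rpow_nonneg hqc.le _)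
          _ = (2:ℝ) ^ (p/2) * (1 - 1/p) ^ (-p) * max 1 ((2:ℝ) ^ (p/2 - 1)) * (1 + B ^ p) := by
              rw [hid]; ring
    _ = (2:ℝ) ^ (p/2) * (1 - 1/p) ^ (-p) * max 1 ((2:ℝ) ^ (p/2 - 1)) * (1 + B ^ p)
          * (Real.pi⁻¹ * ∫ z in UHP, ‖wdb f z‖ ^ p) := by rw [hRHSeq]
end
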